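/- arXiv:1005.0746 — 2 statements merged into one kernel-verified Lean document; each statement's English description precedes it below -/
import Mathlib

section
/- Let g be a finite-dimensional complex Lie algebra, θ an involutive Lie algebra automorphism of g, and p = {x ∈ g : θ(x) = −x}. Let u₀ ∈ p, let u = c_p(u₀) = {x ∈ p : ⁅x, u₀⁆ = 0} be its centralizer in p, and let v be a linear subspace of p complementary to u (p = u ⊕ v). Let T be the space of linear maps a : u → v such that ⁅u₁, a(u₂)⁆ = ⁅u₂, a(u₁)⁆ for all u₁, u₂ ∈ u. Then the linear map T → v sending a to a(u₀) is injective; consequently dim T ≤ dim p − dim c_p(u₀). (This is the tangent-space computation in the paper's Theorem 3.7, showing that the variety of anisotropic subalgebras is smooth of dimension dim p − r at the centralizer of a regular element.) -/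
/-! If `a ∈ T` vanishes at `u₀`, the symmetry condition with `u₂ = u₀` gives
`⁅u₀, a u₁⁆ = ⁅u₁, a u₀⁆ = 0`, so `a u₁ ∈ v ∩ c_p(u₀) = v ∩ u = 0`. Hence `a ↦ a u₀` embeds `T`
into `v`, and `dim v = dim p − dim u` because `p = u ⊕ v`. -/

open Module

variable {g : Type*} [LieRing g] [LieAlgebra ℂ g]

/-- The `(−1)`-eigenspace `p` of an involution `θ` (the anisotropic space). -/
def negSpace (θ : g →ₗ⁅ℂ⁆ g) : Submodule ℂ g where
  carrier := {x | θ x = -x}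
  add_mem' := fun {a b} ha hb => by
    simp only [Set.mem_setOf_eq] at *
    rw [map_add, ha, hb, neg_add]
  zero_mem' := by simp only [Set.mem_setOf_eq, map_zero, neg_zero]
  smul_mem' := fun c x hx => by
    simp only [Set.mem_setOf_eq] at *
    rw [map_smul, hx, smul_neg]

@[simp] lemma mem_negSpace (θ : g →ₗ⁅ℂ⁆ g) (x : g) : x ∈ negSpace θ ↔ θ x = -x := Iff.rfl

/-- The space `T` of linear maps `a : u → v` such that `⁅u₁, a u₂⁆ = ⁅u₂, a u₁⁆`
for all `u₁, u₂ ∈ u`. -/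
def symMaps (u v : Submodule ℂ g) : Submodule ℂ (u →ₗ[ℂ] v) where
  carrier := {a | ∀ x y : u, ⁅(x : g), ((a y : v) : g)⁆ = ⁅(y : g), ((a x : v) : g)⁆}
  add_mem' := fun {a b} ha hb => by
    intro x y
    simp only [LinearMap.add_apply, Submodule.coe_add, lie_add, ha x y, hb x y]
  zero_mem' := by
    intro x y
    simp
  smul_mem' := fun c a ha => by
    intro x y
    simp only [LinearMap.smul_apply, Submodule.coe_smul, lie_smul, ha x y]

def symMapsEval (u v : Submodule ℂ g) (u₀ : u) : symMaps u v →ₗ[ℂ] v :=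
  LinearMap.applyₗ u₀ ∘ₗ (symMaps u v).subtype

theorem lie_apply_eq_zero_of_mem_symMaps {u v : Submodule ℂ g} {a : u →ₗ[ℂ] v}
    (ha : a ∈ symMaps u v) {u₀ : u} (h : a u₀ = 0) (x : u) :
    ⁅((a x : v) : g), (u₀ : g)⁆ = 0 := by
  have hsym := ha x u₀
  rw [h, ZeroMemClass.coe_zero, lie_zero] at hsym
  rw [← lie_skew, ← hsym, neg_zero]

theorem symMapsEval_injective {u v : Submodule ℂ g} (u₀ : u)
    (h : ∀ x ∈ v, ⁅x, (u₀ : g)⁆ = 0 → x = 0) : Function.Injective (symMapsEval u v u₀) := by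
  rw [injective_iff_map_eq_zero]
  rintro ⟨a, ha⟩ h0
  ext x
  exact h _ (a x).2 (lie_apply_eq_zero_of_mem_symMaps ha h0 x)

theorem Submodule.finrank_eq_finrank_sup_sub_of_disjoint {K V : Type*} [DivisionRing K]
    [AddCommGroup V] [Module K V] {u v : Submodule K V} [FiniteDimensional K u]
    [FiniteDimensional K v] (h : Disjoint u v) :
    finrank K v = finrank K ↥(u ⊔ v) - finrank K u := by
  have := Submodule.finrank_sup_add_finrank_inf_eq u v
  rw [h.eq_bot, finrank_bot, add_zero] at this
  omega

theorem symMaps_eval_injective_general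
    (g : Type*) [LieRing g] [LieAlgebra ℂ g] [FiniteDimensional ℂ g]
    (θ : g →ₗ⁅ℂ⁆ g)
    (u₀ : g) (h₀ : θ u₀ = -u₀)
    (u : Submodule ℂ g) (hu : ∀ x, x ∈ u ↔ (θ x = -x ∧ ⁅x, u₀⁆ = 0))
    (v : Submodule ℂ g) (hv : v ≤ negSpace θ)
    (hdisj : u ⊓ v = ⊥) (hspan : ∀ x, θ x = -x → x ∈ u ⊔ v) :
    (∀ a b : u →ₗ[ℂ] v, a ∈ symMaps u v → b ∈ symMaps u v →
        a ⟨u₀, (hu u₀).mpr ⟨h₀, lie_self u₀⟩⟩ = b ⟨u₀, (hu u₀).mpr ⟨h₀, lie_self u₀⟩⟩ →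
        a = b) ∧
      finrank ℂ (symMaps u v) ≤ finrank ℂ (negSpace θ) - finrank ℂ u := by
  have hdisjoint : Disjoint u v := disjoint_iff.mpr hdisj
  have hcentral : ∀ x ∈ v, ⁅x, u₀⁆ = 0 → x = 0 := fun x hxv hx =>
    Submodule.disjoint_def.mp hdisjoint x ((hu x).mpr ⟨hv hxv, hx⟩) hxv
  have hinj := symMapsEval_injective (v := v) ⟨u₀, (hu u₀).mpr ⟨h₀, lie_self u₀⟩⟩ hcentral
  have hsup : u ⊔ v = negSpace θ :=
    le_antisymm (sup_le (fun x hx => ((hu x).mp hx).1) hv) hspan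
  refine ⟨fun a b ha hb hab => congrArg Subtype.val (@hinj ⟨a, ha⟩ ⟨b, hb⟩ hab), ?_⟩
  calc finrank ℂ (symMaps u v) ≤ finrank ℂ v := LinearMap.finrank_le_finrank_of_injective hinj
    _ = finrank ℂ (negSpace θ) - finrank ℂ u := by
      rw [Submodule.finrank_eq_finrank_sup_sub_of_disjoint hdisjoint, hsup]

/-- Let `u₀ ∈ p`, `u = c_p(u₀)` its centralizer in `p`, and `v` a
complement of `u` in `p`.  Let `T` be the space of linear maps `a : u → v` with
`⁅u₁, a u₂⁆ = ⁅u₂, a u₁⁆` for all `u₁, u₂ ∈ u`.  Then `a ↦ a u₀` is injective on `T`;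
consequently `dim T ≤ dim p − dim c_p(u₀)`. -/
theorem symMaps_eval_injective
    (g : Type*) [LieRing g] [LieAlgebra ℂ g] [FiniteDimensional ℂ g]
    (θ : g →ₗ⁅ℂ⁆ g) (hθ : ∀ x, θ (θ x) = x)
    (u₀ : g) (h₀ : θ u₀ = -u₀)
    (u : Submodule ℂ g) (hu : ∀ x, x ∈ u ↔ (θ x = -x ∧ ⁅x, u₀⁆ = 0))
    (v : Submodule ℂ g) (hv : v ≤ negSpace θ)
    (hdisj : u ⊓ v = ⊥) (hspan : ∀ x, θ x = -x → x ∈ u ⊔ v) :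
    (∀ a b : u →ₗ[ℂ] v, a ∈ symMaps u v → b ∈ symMaps u v →
        a ⟨u₀, (hu u₀).mpr ⟨h₀, lie_self u₀⟩⟩ = b ⟨u₀, (hu u₀).mpr ⟨h₀, lie_self u₀⟩⟩ →
        a = b) ∧
      finrank ℂ (symMaps u v) ≤ finrank ℂ (negSpace θ) - finrank ℂ u :=
  symMaps_eval_injective_general g θ u₀ h₀ u hu v hv hdisj hspan
end

section
/- Let g be a finite-dimensional complex Lie algebra, θ an involutive Lie algebra automorphism of g, k and p the (+1)- and (−1)-eigenspaces of θ, and r ≥ 2 an integer. Let A_r : Λ^r p → k ⊗ Λ^{r−2} p be the linear map defined on decomposable multivectors by A_r(x₁ ∧ ⋯ ∧ x_r) = Σ_{1 ≤ i < j ≤ r} ⁅x_i, x_j⁆ ⊗ x₁ ∧ ⋯ ∧ x̂_i ∧ ⋯ ∧ x̂_j ∧ ⋯ ∧ x_r (hatted terms omitted; note ⁅x_i, x_j⁆ ∈ k since x_i, x_j ∈ p). Then for linearly independent vectors x₁, …, x_r ∈ p, one has A_r(x₁ ∧ ⋯ ∧ x_r) = 0 if and only if ⁅x_i, x_j⁆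 = 0 for all i, j, i.e. if and only if the span of x₁, …, x_r is an (abelian) Lie subalgebra of g contained in p. -/
/-! For `i < j`, the wedges of the `r - 2` vectors left after deleting `x i` and `x j` are
distinct members of the exterior-power basis induced by the independent family `x`, hence
linearly independent. A sum `∑ bᵢⱼ ⊗ wᵢⱼ` whose right factors are linearly independent vanishes
only if every `bᵢⱼ` does (tensoring over a field is exact), so `A (x₁ ∧ ⋯ ∧ x_r) = 0` forces
every `⁅x i, x j⁆ = 0`; the converse is immediate from the formula for `A`. -/

open Module TensorProduct

variable {g : Type*} [LieRing g] [LieAlgebra ℂ g]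

/-- The `(+1)`-eigenspace `k` of an involution `θ`. -/
def posSpace (θ : g →ₗ⁅ℂ⁆ g) : Submodule ℂ g where
  carrier := {x | θ x = x}
  add_mem' := fun {a b} ha hb => by
    simp only [Set.mem_setOf_eq] at *
    rw [map_add, ha, hb]
  zero_mem' := by simp only [Set.mem_setOf_eq, map_zero]
  smul_mem' := fun c x hx => by
    simp only [Set.mem_setOf_eq] at *
    rw [map_smul, hx]

/-- For `x, y ∈ p` the bracket `⁅x, y⁆` lies in `k`. -/
def pBracket (θ : g →ₗ⁅ℂ⁆ g) (x y : negSpace θ) : posSpace θ :=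
  ⟨⁅(x : g), (y : g)⁆, by
    have hx : θ (x : g) = -(x : g) := x.2
    have hy : θ (y : g) = -(y : g) := y.2
    show θ ⁅(x : g), (y : g)⁆ = ⁅(x : g), (y : g)⁆
    rw [θ.map_lie, hx, hy, neg_lie, lie_neg, neg_neg]⟩

/-- The strictly increasing enumeration of the complement of `{i, j}` in `Fin r`. -/
def skip2 {r : ℕ} (i j : Fin r) (hij : i ≠ j) : Fin (r - 2) → Fin r := fun q =>
  ({i, j}ᶜ : Finset (Fin r)).orderEmbOfFin
    (by rw [Finset.card_compl, Finset.card_pair hij, Fintype.card_fin]) q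

/-- The decomposable multivector `v₁ ∧ ⋯ ∧ vₙ`, as an element of the `n`-th exterior power. -/
noncomputable def wedge (M : Type*) [AddCommGroup M] [Module ℂ M] (n : ℕ)
    (v : Fin n → M) : ⋀[ℂ]^n M :=
  ⟨ExteriorAlgebra.ιMulti ℂ n v, ExteriorAlgebra.ιMulti_range ℂ n (Set.mem_range_self v)⟩

theorem TensorProduct.eq_zero_of_sum_tmul_eq_zero {R M N ι : Type*} [CommRing R]
    [AddCommGroup M] [Module R M] [Module.Flat R M] [AddCommGroup N] [Module R N] [Fintype ι]
    {m : ι → M} {n : ι → N} (hn : LinearIndependent R n) (h : ∑ i, m i ⊗ₜ[R] n i = 0) (i : ι) :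
    m i = 0 := by
  classical
  have hsingle : ∑ j, m j ⊗ₜ[R] Finsupp.single j (1 : R) = 0 :=
    Module.Flat.lTensor_preserves_injective_linearMap _ hn <| by simpa using h
  simpa [Finsupp.single_apply] using congr(finsuppScalarRight R R M ι $hsingle i)

theorem Finset.pair_eq_pair_of_lt {α : Type*} [LinearOrder α] {i j i' j' : α} (hij : i < j)
    (hij' : i' < j') (h : ({i, j} : Finset α) = {i', j'}) : i = i' ∧ j = j' := by
  have hi : i ∈ ({i', j'} : Finset α) := h ▸ by simp
  have hj : j ∈ ({i', j'} : Finset α) := h ▸ by simp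
  have hi' : i' ∈ ({i, j} : Finset α) := h.symm ▸ by simp
  simp only [Finset.mem_insert, Finset.mem_singleton] at hi hj hi'
  grind

theorem forall_lie_eq_zero_iff_forall_lt {ι L : Type*} [LinearOrder ι] [LieRing L] (x : ι → L) :
    (∀ i j, ⁅x i, x j⁆ = 0) ↔ ∀ i j, i < j → ⁅x i, x j⁆ = 0 := by
  refine ⟨fun h i j _ => h i j, fun h i j => ?_⟩
  rcases lt_trichotomy i j with hlt | rfl | hgt
  · exact h i j hlt
  · exact lie_self _
  · rw [← lie_skew, h j i hgt, neg_zero]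

theorem wedge_comp_skip2 {M : Type*} [AddCommGroup M] [Module ℂ M] {r : ℕ} (x : Fin r → M)
    {i j : Fin r} (hij : i ≠ j) :
    wedge M (r - 2) (x ∘ skip2 i j hij) =
      exteriorPower.ιMulti_family ℂ (r - 2) x
        ⟨{i, j}ᶜ, show Finset.card _ = _ by
          rw [Finset.card_compl, Finset.card_pair hij, Fintype.card_fin]⟩ :=
  rfl

theorem linearIndependent_wedge_comp_skip2 {M : Type*} [AddCommGroup M] [Module ℂ M] {r : ℕ}
    {x : Fin r → M} (hx : LinearIndependent ℂ x) :
    LinearIndependent ℂ fun q : {q : Fin r × Fin r // q.1 < q.2} =>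
      wedge M (r - 2) (x ∘ skip2 q.1.1 q.1.2 (ne_of_lt q.2)) := by
  simp_rw [wedge_comp_skip2]
  refine (exteriorPower.ιMulti_family_linearIndependent_field (r - 2) hx).comp _
    fun q q' hqq' => ?_
  have hpair := Finset.pair_eq_pair_of_lt q.2 q'.2 (compl_injective (congrArg Subtype.val hqq'))
  exact Subtype.ext (Prod.ext hpair.1 hpair.2)

theorem anisotropic_subalgebra_iff_in_ker_general
    (g : Type*) [LieRing g] [LieAlgebra ℂ g]
    (θ : g →ₗ⁅ℂ⁆ g)
    (r : ℕ)
    (A : ↥(⋀[ℂ]^r ↥(negSpace θ)) →ₗ[ℂ]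
      (↥(posSpace θ) ⊗[ℂ] ↥(⋀[ℂ]^(r - 2) ↥(negSpace θ))))
    (hA : ∀ x : Fin r → ↥(negSpace θ),
      A (wedge ↥(negSpace θ) r x) =
        ∑ q : {q : Fin r × Fin r // q.1 < q.2},
          pBracket θ (x q.1.1) (x q.1.2) ⊗ₜ[ℂ]
            wedge ↥(negSpace θ) (r - 2) (x ∘ skip2 q.1.1 q.1.2 (ne_of_lt q.2)))
    (x : Fin r → ↥(negSpace θ)) (hx : LinearIndependent ℂ x) :
    A (wedge ↥(negSpace θ) r x) = 0 ↔
      ∀ i j, ⁅(x i : g), (x j : g)⁆ = 0 := by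
  have hbracket : ∀ i j, pBracket θ (x i) (x j) = 0 ↔ ⁅(x i : g), (x j : g)⁆ = 0 :=
    fun i j => Subtype.ext_iff
  rw [forall_lie_eq_zero_iff_forall_lt (fun i => (x i : g)), hA]
  constructor
  · intro h i j hij
    exact (hbracket i j).mp <|
      eq_zero_of_sum_tmul_eq_zero (linearIndependent_wedge_comp_skip2 hx) h ⟨(i, j), hij⟩
  · intro h
    refine Finset.sum_eq_zero fun q _ => ?_
    rw [(hbracket _ _).mpr (h _ _ q.2), zero_tmul]

/-- Let `θ` be an involutive automorphism of a finite-dimensional complex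
Lie algebra `g` with eigenspaces `k`, `p`, and let `r ≥ 2`.  Let
`A : Λ^r p → k ⊗ Λ^{r−2} p` be the linear map with
`A (x₁ ∧ ⋯ ∧ x_r) = Σ_{i<j} ⁅x_i, x_j⁆ ⊗ x₁ ∧ ⋯ ∧ x̂_i ∧ ⋯ ∧ x̂_j ∧ ⋯ ∧ x_r`.
Then for linearly independent `x₁, …, x_r ∈ p` one has `A (x₁ ∧ ⋯ ∧ x_r) = 0` iff
`⁅x_i, x_j⁆ = 0` for all `i, j`, i.e. iff the span of the `x_i` is an (abelian) Lie
subalgebra of `g` contained in `p`. -/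
theorem anisotropic_subalgebra_iff_in_ker
    (g : Type*) [LieRing g] [LieAlgebra ℂ g] [FiniteDimensional ℂ g]
    (θ : g →ₗ⁅ℂ⁆ g) (hθ : ∀ x, θ (θ x) = x)
    (r : ℕ) (hr : 2 ≤ r)
    (A : ↥(⋀[ℂ]^r ↥(negSpace θ)) →ₗ[ℂ]
      (↥(posSpace θ) ⊗[ℂ] ↥(⋀[ℂ]^(r - 2) ↥(negSpace θ))))
    (hA : ∀ x : Fin r → ↥(negSpace θ),
      A (wedge ↥(negSpace θ) r x) =
        ∑ q : {q : Fin r × Fin r // q.1 < q.2},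
          pBracket θ (x q.1.1) (x q.1.2) ⊗ₜ[ℂ]
            wedge ↥(negSpace θ) (r - 2) (x ∘ skip2 q.1.1 q.1.2 (ne_of_lt q.2)))
    (x : Fin r → ↥(negSpace θ)) (hx : LinearIndependent ℂ x) :
    A (wedge ↥(negSpace θ) r x) = 0 ↔
      ∀ i j, ⁅(x i : g), (x j : g)⁆ = 0 :=
  anisotropic_subalgebra_iff_in_ker_general g θ r A hA x hx
end
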